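/- Let ι be a finite index set, for each i ∈ ι let X_i ⊆ ℝ be nonempty, convex, and compact, and let X = Π_{i∈ι} X_i. Let u_i : (ι → ℝ) → ℝ be utilities and Φ : (ι → ℝ) → ℝ a continuous function, differentiable on X, that is strictly concave on X and satisfies the exact potential identity with respect to (u_i). Then the stage game has a unique pure Nash equilibrium p*, and p* is the unique maximizer of Φ over X. -/

import Mathlib

/-!
The potential `Φ` attains its maximum on the compact set `X`, and by strict concavity only once.
Since unilateral deviations change `Φ` exactly as they change the deviator's utility, a maximizer
of `Φ` is a Nash equilibrium, and a Nash equilibrium maximizes `Φ` in every coordinate separately.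
For a differentiable concave function on a product of convex sets the latter already forces a
global maximum: the derivative at `p` in the direction `q - p` is the sum of the derivatives along
the coordinate directions, each of which is nonpositive, and concavity puts the graph below the
tangent plane.
-/

open Set Function

theorem ConcaveOn.le_add_of_hasFDerivWithinAt {E : Type*} [NormedAddCommGroup E]
    [NormedSpace ℝ E] {s : Set E} {Φ : E → ℝ} {f : StrongDual ℝ E} {p q : E}
    (hΦ : ConcaveOn ℝ s Φ) (hf : HasFDerivWithinAt Φ f s p) (hp : p ∈ s) (hq : q ∈ s) :
    Φ q ≤ Φ p + f (q - p) := by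
  set g : ℝ →ᵃ[ℝ] E := AffineMap.lineMap p q
  have hmaps : MapsTo g (Icc 0 1) s := hΦ.1.mapsTo_lineMap hp hq
  have hg : ConcaveOn ℝ (Icc 0 1) (Φ ∘ g) := (hΦ.comp_affineMap g).subset hmaps (convex_Icc 0 1)
  have hg' : HasDerivWithinAt (Φ ∘ g) (f (q - p)) (Icc 0 1) 0 :=
    hf.comp_hasDerivWithinAt_of_eq 0 AffineMap.hasDerivWithinAt_lineMap hmaps
      (AffineMap.lineMap_apply_zero p q).symm
  have hslope := hg.slope_le_of_hasDerivWithinAt (by simp) (by simp) zero_lt_one hg'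
  simp only [slope, comp_apply, g, AffineMap.lineMap_apply_one, AffineMap.lineMap_apply_zero,
    sub_zero, inv_one, one_smul, vsub_eq_sub] at hslope
  linarith

section Pi

variable {ι : Type*} [DecidableEq ι] {E : ι → Type*} {S : ∀ i, Set (E i)}

theorem ConcaveOn.isMaxOn_of_forall_update_le [Fintype ι] [∀ i, NormedAddCommGroup (E i)]
    [∀ i, NormedSpace ℝ (E i)] {Φ : (∀ i, E i) → ℝ} {p : ∀ i, E i}
    (hS : ∀ i, Convex ℝ (S i)) (hΦ : ConcaveOn ℝ (univ.pi S) Φ)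
    (hd : DifferentiableWithinAt ℝ Φ (univ.pi S) p) (hp : p ∈ univ.pi S)
    (h : ∀ i, ∀ x ∈ S i, Φ (update p i x) ≤ Φ p) :
    IsMaxOn Φ (univ.pi S) p := by
  intro q hq
  set f := fderivWithin ℝ Φ (univ.pi S) p
  have hq' : ∀ i, q i ∈ S i := fun i => hq i trivial
  have hcoord : ∀ i, f (update p i (q i) - p) ≤ 0 := by
    intro i
    have hseg : segment ℝ p (update p i (q i)) = update p i '' segment ℝ (p i) (q i) := by
      rw [Pi.image_update_segment, update_eq_self]
    have hsub : segment ℝ p (update p i (q i)) ⊆ univ.pi S :=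
      hΦ.1.segment_subset hp ((update_mem_pi_iff_of_mem hp).2 fun _ => hq' i)
    have hmax : IsMaxOn Φ (segment ℝ p (update p i (q i))) p := by
      rw [hseg]
      rintro _ ⟨x, hx, rfl⟩
      exact h i x ((hS i).segment_subset (hp i trivial) (hq' i) hx)
    exact hmax.localize.hasFDerivWithinAt_nonpos (hd.hasFDerivWithinAt.mono hsub)
      (sub_mem_posTangentConeAt_of_segment_subset subset_rfl)
  have hsum : q - p = ∑ i, (update p i (q i) - p) := by
    have hupd : ∀ i, update p i (q i) - p = Pi.single i (q i - p i) := by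
      intro i
      ext j
      rcases eq_or_ne j i with rfl | hj <;> simp [*]
    rw [← Finset.univ_sum_single (q - p)]
    simp only [hupd, Pi.sub_apply]
  calc Φ q ≤ Φ p + f (q - p) := hΦ.le_add_of_hasFDerivWithinAt hd.hasFDerivWithinAt hp hq
    _ ≤ Φ p := by
      rw [hsum, map_sum]
      linarith [Finset.sum_nonpos fun i (_ : i ∈ Finset.univ) => hcoord i]

def IsPureNashEquilibrium (S : ∀ i, Set (E i)) (u : ι → (∀ i, E i) → ℝ) (p : ∀ i, E i) : Prop :=
  ∀ i, ∀ x ∈ S i, u i (update p i x) ≤ u i p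

def IsExactPotential (S : ∀ i, Set (E i)) (u : ι → (∀ i, E i) → ℝ) (Φ : (∀ i, E i) → ℝ) :
    Prop :=
  ∀ i, ∀ p ∈ univ.pi S, ∀ x ∈ S i, Φ (update p i x) - Φ p = u i (update p i x) - u i p

namespace IsExactPotential

variable {u : ι → (∀ i, E i) → ℝ} {Φ : (∀ i, E i) → ℝ} {p : ∀ i, E i}

theorem isPureNashEquilibrium_iff (hΦ : IsExactPotential S u Φ) (hp : p ∈ univ.pi S) :
    IsPureNashEquilibrium S u p ↔ ∀ i, ∀ x ∈ S i, Φ (update p i x) ≤ Φ p := by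
  refine forall₂_congr fun i x => forall_congr' fun hx => ?_
  have := hΦ i p hp x hx
  constructor <;> intro <;> linarith

theorem isPureNashEquilibrium_of_isMaxOn (hΦ : IsExactPotential S u Φ) (hp : p ∈ univ.pi S)
    (hmax : IsMaxOn Φ (univ.pi S) p) : IsPureNashEquilibrium S u p :=
  (hΦ.isPureNashEquilibrium_iff hp).2 fun _ _ hx =>
    hmax ((update_mem_pi_iff_of_mem hp).2 fun _ => hx)

theorem isMaxOn_of_isPureNashEquilibrium [Fintype ι] [∀ i, NormedAddCommGroup (E i)]
    [∀ i, NormedSpace ℝ (E i)] (hΦ : IsExactPotential S u Φ) (hS : ∀ i, Convex ℝ (S i))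
    (hconc : ConcaveOn ℝ (univ.pi S) Φ) (hd : DifferentiableWithinAt ℝ Φ (univ.pi S) p)
    (hp : p ∈ univ.pi S) (hNE : IsPureNashEquilibrium S u p) : IsMaxOn Φ (univ.pi S) p :=
  hconc.isMaxOn_of_forall_update_le hS hd hp ((hΦ.isPureNashEquilibrium_iff hp).1 hNE)

end IsExactPotential

end Pi

theorem stmt_8 {ι : Type*} [Fintype ι] [DecidableEq ι]
    (Xi : ι → Set ℝ) (hne : ∀ i, (Xi i).Nonempty)
    (hconv : ∀ i, Convex ℝ (Xi i)) (hcpt : ∀ i, IsCompact (Xi i))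
    (X : Set (ι → ℝ)) (hX : X = {p | ∀ i, p i ∈ Xi i})
    (u : ι → (ι → ℝ) → ℝ) (Φ : (ι → ℝ) → ℝ)
    (hcont : ContinuousOn Φ X) (hdiff : DifferentiableOn ℝ Φ X)
    (hsc : StrictConcaveOn ℝ X Φ)
    (hpot : ∀ i, ∀ p ∈ X, ∀ q ∈ Xi i,
      Φ (Function.update p i q) - Φ p = u i (Function.update p i q) - u i p) :
    ∃ pstar ∈ X,
      (∀ i, ∀ q ∈ Xi i, u i (Function.update pstar i q) ≤ u i pstar) ∧
      (∀ q ∈ X, Φ q ≤ Φ pstar) ∧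
      (∀ p ∈ X, (∀ i, ∀ q ∈ Xi i, u i (Function.update p i q) ≤ u i p) → p = pstar) ∧
      (∀ p ∈ X, (∀ q ∈ X, Φ q ≤ Φ p) → p = pstar) := by
  obtain rfl : X = univ.pi Xi := by rw [hX]; ext; simp
  have hΦ : IsExactPotential Xi u Φ := hpot
  obtain ⟨pstar, hpstar, hmax⟩ :=
    (isCompact_univ_pi hcpt).exists_isMaxOn (univ_pi_nonempty_iff.2 hne) hcont
  have hunique : ∀ p ∈ univ.pi Xi, IsMaxOn Φ (univ.pi Xi) p → p = pstar :=
    fun p hp hpmax => hsc.eq_of_isMaxOn hpmax hmax hp hpstar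
  refine ⟨pstar, hpstar, hΦ.isPureNashEquilibrium_of_isMaxOn hpstar hmax, hmax,
    fun p hp hNE => hunique p hp ?_, hunique⟩
  exact hΦ.isMaxOn_of_isPureNashEquilibrium hconv hsc.concaveOn (hdiff p hp) hp hNE
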